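/- Bit-scanning meeting guarantee: consider two adjacent agents a, b with distinct identifiers where a's identifier is maximal. Each agent scans its identifier bits from position 0 to L−1; in the two rounds allocated to bit i, an agent moves out and back through its fixed port if its bit i is 1, and stays put both rounds if its bit i is 0. If a's fixed port leads to b's node, then there exists a round in which a is at b's node while b is also there (b stationary), i.e., the two agents meet. -/

import Mathlib

theorem Nat.exists_testBit_true_false_of_lt {m n : ℕ} (h : m < n) :
    ∃ i, n.testBit i = true ∧ m.testBit i = false := by
  by_contra! hbits
  exact h.not_ge (Nat.le_of_testBit fun i hi => Bool.not_eq_false _ ▸ hbits i hi)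

theorem Nat.lt_of_testBit_of_lt_two_pow {n i L : ℕ} (hn : n < 2 ^ L) (hi : n.testBit i = true) :
    i < L :=
  (Nat.pow_lt_pow_iff_right (by norm_num)).1 ((Nat.ge_two_pow_of_testBit hi).trans_lt hn)

theorem bit_scanning_meeting_general
    {Node : Type*} (na nb : Node) (L A B : ℕ)
    (hA : A < 2 ^ L) (hlt : B < A)
    (posA posB : ℕ → Node)
    (hposA : ∀ i < L, (A.testBit i = true → posA (2 * i) = nb) ∧
      (A.testBit i = false → posA (2 * i) = na))
    (hposB : ∀ i < L, B.testBit i = false →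
      posB (2 * i) = nb ∧ posB (2 * i + 1) = nb) :
    ∃ r < 2 * L, posA r = nb ∧ posB r = nb := by
  obtain ⟨i, hAi, hBi⟩ := Nat.exists_testBit_true_false_of_lt hlt
  have hiL : i < L := Nat.lt_of_testBit_of_lt_two_pow hA hAi
  exact ⟨2 * i, by omega, (hposA i hiL).1 hAi, (hposB i hiL hBi).1⟩

/-- Bit-scanning meeting guarantee: if agent a's identifier exceeds b's,
and a's fixed port leads to b's node, then a and b meet within 2L rounds. -/
theorem bit_scanning_meeting
    {Node : Type*} (na nb : Node) (L A B : ℕ)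
    (hA : A < 2 ^ L) (hB : B < 2 ^ L) (hlt : B < A)
    (posA posB : ℕ → Node)
    (hposA : ∀ i < L, (A.testBit i = true → posA (2 * i) = nb) ∧
      (A.testBit i = false → posA (2 * i) = na))
    (hposB : ∀ i < L, B.testBit i = false →
      posB (2 * i) = nb ∧ posB (2 * i + 1) = nb) :
    ∃ r < 2 * L, posA r = nb ∧ posB r = nb :=
  bit_scanning_meeting_general na nb L A B hA hlt posA posB hposA hposB
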